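/- Let T > 0, A, B ≥ 0, and y : [0,T] → ℝ continuous nonnegative satisfy y(t)² ≤ A + B ∫₀ᵗ y(s)⁶ ds for all t ∈ [0,T]. If 2 A² B T < ln 2, then y(t)² ≤ 2A for all t ∈ [0,T]. -/

import Mathlib

open Set MeasureTheory intervalIntegral

lemma key_19 (T : ℝ) (hT : 0 < T) (Y : ℝ → ℝ) (A B : ℝ) (hA : 0 < A) (hB : 0 ≤ B)
    (hcont : ContinuousOn Y (Set.Icc 0 T))
    (hnn : ∀ t ∈ Set.Icc 0 T, 0 ≤ Y t)
    (hineq : ∀ t ∈ Set.Icc 0 T, Y t ≤ A + B * ∫ s in (0:ℝ)..t, (Y s) ^ 3)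
    (hsmall : 2 * A ^ 2 * B * T < 3/4) :
    ∀ t ∈ Set.Icc 0 T, Y t ≤ 2 * A := by
  have hcont3 : ContinuousOn (fun s => Y s ^ 3) (Set.Icc 0 T) := hcont.pow 3
  set F : ℝ → ℝ := fun t => A + B * ∫ s in (0:ℝ)..t, (Y s) ^ 3 with hF
  have hsub : ∀ t ∈ Set.Icc 0 T, Set.uIcc (0:ℝ) t ⊆ Set.Icc 0 T := by
    intro t ht
    rw [Set.uIcc_of_le ht.1]
    exact Set.Icc_subset_Icc le_rfl ht.2
  have hII : ∀ t ∈ Set.Icc 0 T, IntervalIntegrable (fun s => Y s ^ 3) volume 0 t := by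
    intro t ht
    exact (hcont3.mono (hsub t ht)).intervalIntegrable
  -- F ≥ A on Icc
  have hFA : ∀ t ∈ Set.Icc 0 T, A ≤ F t := by
    intro t ht
    have : 0 ≤ ∫ s in (0:ℝ)..t, (Y s) ^ 3 := by
      apply intervalIntegral.integral_nonneg ht.1
      intro u hu
      exact pow_nonneg (hnn u ⟨hu.1, hu.2.trans ht.2⟩) 3
    simp only [hF]
    nlinarith
  have hFpos : ∀ t ∈ Set.Icc 0 T, 0 < F t := fun t ht => lt_of_lt_of_le hA (hFA t ht)
  -- F continuous on Icc
  have hFcont : ContinuousOn F (Set.Icc 0 T) := by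
    have h1 : ContinuousOn (fun t : ℝ => ∫ s in (0:ℝ)..t, Y s ^ 3) (Set.Icc 0 T) := by
      have := intervalIntegral.continuousOn_primitive_interval
        (f := fun s => Y s ^ 3) (a := (0:ℝ)) (b := T) (μ := volume)
        ((hcont3.mono (by rw [Set.uIcc_of_le hT.le])).integrableOn_compact isCompact_uIcc)
      rwa [Set.uIcc_of_le hT.le] at this
    exact continuousOn_const.add (continuousOn_const.mul h1)
  -- derivative of F at interior points
  have hFderiv : ∀ t ∈ Set.Ioo 0 T, HasDerivAt F (B * Y t ^ 3) t := by
    intro t ht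
    have htIcc : t ∈ Set.Icc 0 T := Set.Ioo_subset_Icc_self ht
    have hnhds : Set.Icc 0 T ∈ nhds t := Icc_mem_nhds ht.1 ht.2
    have hca : ContinuousAt (fun s => Y s ^ 3) t := hcont3.continuousAt hnhds
    have hmeas : StronglyMeasurableAtFilter (fun s => Y s ^ 3) (nhds t) volume := by
      have := hcont3.stronglyMeasurableAtFilter_nhdsWithin (μ := volume) measurableSet_Icc t
      rwa [nhdsWithin_eq_nhds.2 hnhds] at this
    have := (intervalIntegral.integral_hasDerivAt_right (hII t htIcc) hmeas hca).const_mul B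
    exact this.const_add A
  -- g is monotone
  set g : ℝ → ℝ := fun t => (F t ^ 2)⁻¹ + 2 * B * t with hg
  have hgderiv : ∀ t ∈ Set.Ioo 0 T, HasDerivAt g
      (-(2 * F t * (B * Y t ^ 3)) / (F t ^ 2) ^ 2 + 2 * B) t := by
    intro t ht
    have hF2 : HasDerivAt (fun u => F u ^ 2) (2 * F t * (B * Y t ^ 3)) t := by
      have := (hFderiv t ht).fun_pow 2
      refine this.congr_deriv ?_
      norm_num
    have hne : F t ^ 2 ≠ 0 := by
      have := hFpos t (Set.Ioo_subset_Icc_self ht); positivity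
    have hinv := hF2.inv hne
    have hlin : HasDerivAt (fun u : ℝ => 2 * B * u) (2 * B) t := by
      simpa using (hasDerivAt_id t).const_mul (2 * B)
    exact hinv.add hlin
  have hgd_nonneg : ∀ t ∈ Set.Ioo 0 T, 0 ≤ -(2 * F t * (B * Y t ^ 3)) / (F t ^ 2) ^ 2 + 2 * B := by
    intro t ht
    have htIcc : t ∈ Set.Icc 0 T := Set.Ioo_subset_Icc_self ht
    have hFp := hFpos t htIcc
    have hYF : Y t ≤ F t := hineq t htIcc
    have hYn : 0 ≤ Y t := hnn t htIcc
    have hY3 : Y t ^ 3 ≤ F t ^ 3 := pow_le_pow_left₀ hYn hYF 3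
    rw [div_add' _ _ _ (by positivity), le_div_iff₀ (by positivity)]
    nlinarith [mul_le_mul_of_nonneg_left hY3 (mul_nonneg hB hFp.le)]
  have hmono : MonotoneOn g (Set.Icc 0 T) := by
    have hint : interior (Set.Icc (0:ℝ) T) = Set.Ioo 0 T := interior_Icc
    apply monotoneOn_of_deriv_nonneg (convex_Icc 0 T)
    · apply ContinuousOn.add _ (by fun_prop)
      exact (hFcont.pow 2).inv₀ (fun t ht => pow_ne_zero 2 (hFpos t ht).ne')
    · rw [hint]
      intro t ht
      exact (hgderiv t ht).differentiableAt.differentiableWithinAt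
    · rw [hint]
      intro t ht
      rw [(hgderiv t ht).deriv]
      exact hgd_nonneg t ht
  -- conclude
  intro t ht
  have h0 : g 0 ≤ g t := hmono ⟨le_rfl, hT.le⟩ ht ht.1
  have hF0 : F 0 = A := by simp [hF]
  have hg0 : g 0 = (A ^ 2)⁻¹ := by simp [hg, hF0]
  rw [hg0] at h0
  -- h0 : (A^2)⁻¹ ≤ (F t ^ 2)⁻¹ + 2 B t
  have hFp := hFpos t ht
  have hBt : 2 * B * t ≤ 2 * B * T := by nlinarith [ht.2, hB]
  have hBT : 2 * B * T < 3 / (4 * A ^ 2) := by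
    rw [lt_div_iff₀ (by positivity)]
    nlinarith
  have hinv : (4 * A ^ 2)⁻¹ ≤ (F t ^ 2)⁻¹ := by
    have e3 : (1:ℝ) / A ^ 2 - 3 / (4 * A ^ 2) = (4 * A ^ 2)⁻¹ := by
      field_simp; ring
    have e4 : (A ^ 2)⁻¹ = 1 / A ^ 2 := by rw [one_div]
    linarith
  have hF2 : F t ^ 2 ≤ 4 * A ^ 2 := by
    have h4 : (0:ℝ) < 4 * A ^ 2 := by positivity
    have hp : (0:ℝ) < F t ^ 2 := by positivity
    exact (inv_le_inv₀ h4 hp).mp hinv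
  have : F t ≤ 2 * A := by nlinarith
  exact (hineq t ht).trans this

theorem stmt_19 (T : ℝ) (hT : 0 < T) (y : ℝ → ℝ) (A B : ℝ) (hA : 0 ≤ A) (hB : 0 ≤ B)
    (hcont : ContinuousOn y (Set.Icc 0 T))
    (hnn : ∀ t ∈ Set.Icc 0 T, 0 ≤ y t)
    (hineq : ∀ t ∈ Set.Icc 0 T, y t ^ 2 ≤ A + B * ∫ s in (0:ℝ)..t, (y s) ^ 6)
    (hsmall : 2 * A ^ 2 * B * T < Real.log 2) :
    ∀ t ∈ Set.Icc 0 T, y t ^ 2 ≤ 2 * A := by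
  have hlog : Real.log 2 < 3/4 := by
    have := Real.log_two_lt_d9
    linarith [show (0.6931471808:ℝ) < 3/4 by norm_num]
  have hsmall' : 2 * A ^ 2 * B * T < 3/4 := hsmall.trans hlog
  intro t ht
  apply le_of_forall_pos_le_add
  intro ε hε
  set c : ℝ := 3/4 - 2 * A ^ 2 * B * T with hc
  have hcpos : 0 < c := by simp only [hc]; linarith
  set δ : ℝ := min (ε/2) (min 1 (c / (2 * (2*A + 1) * (B*T + 1)))) with hδ
  have hδpos : 0 < δ := by
    apply lt_min (by linarith)
    apply lt_min one_pos
    positivity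
  have hδ1 : δ ≤ 1 := (min_le_right _ _).trans (min_le_left _ _)
  have hδc : δ ≤ c / (2 * (2*A + 1) * (B*T + 1)) := (min_le_right _ _).trans (min_le_right _ _)
  have hδε : δ ≤ ε/2 := min_le_left _ _
  clear_value δ c
  have hsmallδ : 2 * (A + δ) ^ 2 * B * T < 3/4 := by
    have hden : (0:ℝ) < 2 * (2*A + 1) * (B*T + 1) := by positivity
    have h1 : δ * (2 * (2*A + 1) * (B*T + 1)) ≤ c := by
      rw [← le_div_iff₀ hden]; exact hδc
    have hBT : 0 ≤ B * T := mul_nonneg hB hT.le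
    have e1 : δ ^ 2 * (B * T) ≤ δ * (B * T) :=
      mul_le_mul_of_nonneg_right (by nlinarith : δ ^ 2 ≤ δ) hBT
    have e3 : 0 < δ * (2 * A + 1) := by positivity
    nlinarith [e1, h1, e3, hBT, hδpos]
  have hY := key_19 T hT (fun s => y s ^ 2) (A + δ) B (by linarith) hB
    (hcont.pow 2)
    (fun s hs => sq_nonneg _)
    (fun s hs => by
      have h6 : (∫ u in (0:ℝ)..s, ((y u) ^ 2) ^ 3) = ∫ u in (0:ℝ)..s, (y u) ^ 6 := by
        apply intervalIntegral.integral_congr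
        intro u _
        ring
      simp only [h6]
      have := hineq s hs
      linarith)
    hsmallδ
  have := hY t ht
  linarith
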